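/- arXiv:1711.02399 — 3 statements merged into one kernel-verified Lean document; each statement's English description precedes it below -/
import Mathlib

section
/- Let x : ℕ → ℕ → ℕ → ℕ be defined by the recursion x(i,0,0) = 1, x(i,0,ℓ) = 0 for ℓ ≥ 1, and, for all n ≥ 0: x(i,n+1,ℓ) = x(i,n,ℓ) if n and i have the same parity, while x(i,n+1,ℓ) = x(i,n,ℓ) + x(i+1,n,ℓ-1) (with x(i+1,n,-1) interpreted as 0) if n and i have different parities. Then for all i ≥ n and all 0 ≤ ℓ ≤ n with i + ℓ even, x(i,n,ℓ) ≡ choose(ℓ + ⌊(n-ℓ)/2⌋, ℓ) (mod 2). -/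
/-!
Induction on `n`. A step with `n ≡ i (mod 2)` leaves `x(i,n,ℓ)` unchanged, and so does
`⌊(n-ℓ)/2⌋` because `n - ℓ` is even; a step with `n ≢ i` is Pascal's rule
`C(ℓ+k, ℓ) + C(ℓ+k, ℓ-1) = C(ℓ+k+1, ℓ)` with `n - ℓ = 2k + 1`.
The congruence therefore holds as an equality of natural numbers.
-/

/-- The coefficients `x(i,n,ℓ)` of the coordinate-change formula for tame
`ℤ/2`-equivariant formal group laws (Lemma 3.5). -/
def xcoef : ℕ → ℕ → ℕ → ℕ
  | _, 0, 0 => 1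
  | _, 0, _ + 1 => 0
  | i, n + 1, ℓ =>
      if n % 2 = i % 2 then xcoef i n ℓ
      else xcoef i n ℓ + (if ℓ = 0 then 0 else xcoef (i + 1) n (ℓ - 1))

namespace xcoef

theorem succ_of_mod_eq {i n : ℕ} (ℓ : ℕ) (h : n % 2 = i % 2) :
    xcoef i (n + 1) ℓ = xcoef i n ℓ := by
  rw [xcoef, if_pos h]

theorem succ_succ_of_mod_ne {i n : ℕ} (ℓ : ℕ) (h : n % 2 ≠ i % 2) :
    xcoef i (n + 1) (ℓ + 1) = xcoef i n (ℓ + 1) + xcoef (i + 1) n ℓ := by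
  rw [xcoef, if_neg h, if_neg ℓ.succ_ne_zero, Nat.add_sub_cancel]

theorem zero_right (i n : ℕ) : xcoef i n 0 = 1 := by
  induction n with
  | zero => rfl
  | succ n ih => rw [xcoef]; split <;> simp [ih]

theorem eq_zero_of_lt {i n ℓ : ℕ} (h : n < ℓ) : xcoef i n ℓ = 0 := by
  induction n generalizing i ℓ with
  | zero => obtain ⟨m, rfl⟩ := Nat.exists_eq_add_of_lt h; rfl
  | succ n ih =>
    obtain ⟨m, rfl⟩ : ∃ m, ℓ = m + 1 := ⟨ℓ - 1, by omega⟩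
    by_cases hni : n % 2 = i % 2
    · rw [succ_of_mod_eq _ hni, ih (by omega)]
    · rw [succ_succ_of_mod_ne _ hni, ih (by omega), ih (by omega)]

theorem eq_choose {i n ℓ : ℕ} (hℓ : ℓ ≤ n) (hpar : (i + ℓ) % 2 = 0) :
    xcoef i n ℓ = (ℓ + (n - ℓ) / 2).choose ℓ := by
  induction n generalizing i ℓ with
  | zero => rw [Nat.le_zero.mp hℓ]; rfl
  | succ n ih =>
    by_cases hni : n % 2 = i % 2
    · rw [succ_of_mod_eq _ hni, ih (by omega) hpar, show (n + 1 - ℓ) / 2 = (n - ℓ) / 2 by omega]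
    rcases ℓ with _ | m
    · simp [zero_right]
    rw [succ_succ_of_mod_ne _ hni, ih (i := i + 1) (by omega) (by omega)]
    obtain rfl | hmn : m = n ∨ m < n := by omega
    · simp [eq_zero_of_lt]
    obtain ⟨k, hk⟩ : ∃ k, n - (m + 1) = 2 * k + 1 := ⟨(n - (m + 1)) / 2, by omega⟩
    rw [ih (by omega) (by omega), show m + 1 + (n - (m + 1)) / 2 = m + k + 1 by omega,
      show m + (n - m) / 2 = m + k + 1 by omega,
      show m + 1 + (n + 1 - (m + 1)) / 2 = m + k + 1 + 1 by omega,
      Nat.choose_succ_succ' (m + k + 1) m, Nat.add_comm]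

end xcoef

theorem stmt_0_general (i n ℓ : ℕ) (hℓ : ℓ ≤ n) (hpar : (i + ℓ) % 2 = 0) :
    xcoef i n ℓ % 2 = Nat.choose (ℓ + (n - ℓ) / 2) ℓ % 2 := by
  rw [xcoef.eq_choose hℓ hpar]

theorem stmt_0 (i n ℓ : ℕ) (hin : n ≤ i) (hℓ : ℓ ≤ n) (hpar : (i + ℓ) % 2 = 0) :
    xcoef i n ℓ % 2 = Nat.choose (ℓ + (n - ℓ) / 2) ℓ % 2 :=
  stmt_0_general i n ℓ hℓ hpar
end

section
/- Let n and ℓ be natural numbers of different parities with 1 ≤ ℓ ≤ n. Then choose(ℓ + ⌊(n-ℓ)/2⌋, ℓ) + choose(ℓ-1 + ⌊(n-(ℓ-1))/2⌋, ℓ-1) ≡ choose(ℓ + ⌊((n+1)-ℓ)/2⌋, ℓ) (mod 2). -/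
/-! When `n - ℓ` is odd, the floors on the left are `k` and `k + 1` where `n - ℓ = 2k + 1`, and the
right-hand floor is `k + 1`, so the congruence is Pascal's rule and in fact an equality. -/

theorem Nat.choose_add_add_choose_add_succ (m k : ℕ) :
    (m + 1 + k).choose (m + 1) + (m + (k + 1)).choose m = (m + 1 + (k + 1)).choose (m + 1) := by
  rw [show m + 1 + (k + 1) = (m + k + 1) + 1 by omega, Nat.choose_succ_succ',
    show m + 1 + k = m + k + 1 by omega, show m + (k + 1) = m + k + 1 by omega, add_comm]

theorem stmt_1 (n ℓ : ℕ) (h1 : 1 ≤ ℓ) (h2 : ℓ ≤ n) (hpar : n % 2 ≠ ℓ % 2) :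
    (Nat.choose (ℓ + (n - ℓ) / 2) ℓ + Nat.choose (ℓ - 1 + (n - (ℓ - 1)) / 2) (ℓ - 1)) % 2
      = Nat.choose (ℓ + (n + 1 - ℓ) / 2) ℓ % 2 := by
  obtain ⟨m, rfl⟩ : ∃ m, ℓ = m + 1 := ⟨ℓ - 1, by omega⟩
  obtain ⟨k, hk⟩ : ∃ k, n - (m + 1) = 2 * k + 1 := ⟨(n - (m + 1)) / 2, by omega⟩
  have hleft : (n - (m + 1)) / 2 = k := by omega
  have hright : (n - m) / 2 = k + 1 := by omega
  have htop : (n + 1 - (m + 1)) / 2 = k + 1 := by omega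
  rw [hleft, Nat.add_sub_cancel, hright, htop, Nat.choose_add_add_choose_add_succ]
end

section
/- Let R be a commutative ring, e ∈ R, and r : ℕ × ℕ → R a family of elements satisfying: (1) 2·r(p,q) = 0 for all p,q; (2) r(p,q) = e^{2^q}·r(p,q+1) for all p,q; (3) r(p,q) = e^{2^p}·r(p+1,q) for all p,q; (4) e·r(0,q) = 0 for all q ≥ 1. Then r(p,q) = 0 for all p,q with min(p,q) ≤ max(p,q) and max(p,q) ≥ 1 — in fact r(p,q) = 0 for all p, q with q ≥ 1 or p ≥ 1. -/
/-!
Vanishing of `r p q` propagates downwards in `q` (by (2)) and, once `q ≥ p`, from `r p (q + 1)` to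
`r (p + 1) q`, since then `e ^ 2 ^ q = e ^ (2 ^ q - 2 ^ p) * e ^ 2 ^ p` and (2), (3) combine to
`r (p + 1) q = e ^ (2 ^ q - 2 ^ p) * r p (q + 1)`. The row `p = 0` vanishes because
`r 0 q = e ^ 2 ^ q * r 0 (q + 1)` and `e * r 0 (q + 1) = 0`; induction on `p` does the rest.
-/

section

variable {M : Type*} [MonoidWithZero M] {e : M} {r : ℕ → ℕ → M}

theorem eq_zero_of_le_right_of_eq_zero (h2 : ∀ p q, r p q = e ^ (2 ^ q) * r p (q + 1))
    {p q q' : ℕ} (hq : q ≤ q') (h : r p q' = 0) : r p q = 0 := by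
  induction hq using Nat.decreasingInduction with
  | of_succ k _ ih => rw [h2, ih, mul_zero]
  | self => exact h

theorem eq_zero_succ_left_of_eq_zero (h2 : ∀ p q, r p q = e ^ (2 ^ q) * r p (q + 1))
    (h3 : ∀ p q, r p q = e ^ (2 ^ p) * r (p + 1) q) {p q : ℕ} (hpq : p ≤ q)
    (h : r p (q + 1) = 0) : r (p + 1) q = 0 := by
  have hpow : 2 ^ q = (2 ^ q - 2 ^ p) + 2 ^ p :=
    (Nat.sub_add_cancel (Nat.pow_le_pow_right two_pos hpq)).symm
  rw [h2, hpow, pow_add, mul_assoc, ← h3, h, mul_zero]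

theorem eq_zero_zero_left (h2 : ∀ p q, r p q = e ^ (2 ^ q) * r p (q + 1))
    (h4 : ∀ q, 1 ≤ q → e * r 0 q = 0) (q : ℕ) : r 0 q = 0 := by
  rw [h2]
  exact pow_mul_eq_zero_of_le Nat.one_le_two_pow (by rw [pow_one]; exact h4 _ q.succ_pos)

theorem eq_zero_of_pow_two_relations (h2 : ∀ p q, r p q = e ^ (2 ^ q) * r p (q + 1))
    (h3 : ∀ p q, r p q = e ^ (2 ^ p) * r (p + 1) q) (h4 : ∀ q, 1 ≤ q → e * r 0 q = 0)
    (p q : ℕ) : r p q = 0 := by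
  induction p generalizing q with
  | zero => exact eq_zero_zero_left h2 h4 q
  | succ p ih =>
    exact eq_zero_of_le_right_of_eq_zero h2 (le_max_left q p)
      (eq_zero_succ_left_of_eq_zero h2 h3 (le_max_right q p) (ih _))

end

theorem stmt_12_general (R : Type*) [CommRing R] (e : R) (r : ℕ → ℕ → R)
    (h2 : ∀ p q, r p q = e ^ (2 ^ q) * r p (q + 1))
    (h3 : ∀ p q, r p q = e ^ (2 ^ p) * r (p + 1) q)
    (h4 : ∀ q, 1 ≤ q → e * r 0 q = 0) :
    ∀ p q, 1 ≤ p ∨ 1 ≤ q → r p q = 0 :=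
  fun p q _ => eq_zero_of_pow_two_relations h2 h3 h4 p q

theorem stmt_12 (R : Type*) [CommRing R] (e : R) (r : ℕ → ℕ → R)
    (h1 : ∀ p q, 2 • r p q = 0)
    (h2 : ∀ p q, r p q = e ^ (2 ^ q) * r p (q + 1))
    (h3 : ∀ p q, r p q = e ^ (2 ^ p) * r (p + 1) q)
    (h4 : ∀ q, 1 ≤ q → e * r 0 q = 0) :
    ∀ p q, 1 ≤ p ∨ 1 ≤ q → r p q = 0 :=
  stmt_12_general R e r h2 h3 h4
end
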